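/- Let $X$ be a Banach space and let $f_n : X \to \mathbb{R}\cup\{\infty\}$ be proper lower semicontinuous convex functions such that $\Gamma\text{-}\liminf_n f_n > -\infty$ everywhere and there exists a norm-convergent sequence $(a_n)$ in $X$ with $\limsup_n f_n(a_n) < \infty$. Then for every sequence $(x_n, x_n^*) \in \partial f_n$ with $x_n \to x$ in norm and $x_n^* \rightharpoonup^* x^*$ in the weak-star topology, one has: (a) $\Gamma\text{-}\liminf_n f_n(x) = \liminf_n f_n(x_n)$ and $\Gamma\text{-}\limsup_n f_n(x) = \limsup_n f_n(x_n)$; (b) $(x, x^*) \in \partial^{\mathrm{Fen}}(\Gamma\text{-}\liminf_n f_n) \cap \partial(\Gamma\text{-}\limsup_n f_n)$. -/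

import Mathlib

open Filter Topology

noncomputable section

variable {X : Type*} [NormedAddCommGroup X] [NormedSpace ℝ X]

/-- Fenchel conjugate of `f : X → EReal`, as a function on the dual. -/
def fconj (f : X → EReal) (p : X →L[ℝ] ℝ) : EReal :=
  ⨆ x : X, ((p x : ℝ) : EReal) - f x

/-- `f` is a proper convex lower semicontinuous function with values in `ℝ ∪ {∞}`. -/
def IsPLC (f : X → EReal) : Prop :=
  (∃ x, f x ≠ ⊤) ∧ (∀ x, f x ≠ ⊥) ∧
    Convex ℝ {q : X × ℝ | f q.1 ≤ (q.2 : EReal)} ∧ LowerSemicontinuous f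

/-- Sequential Γ-liminf in the norm topology. -/
def gLiminf (f : ℕ → X → EReal) (x : X) : EReal :=
  ⨅ (u : ℕ → X) (_ : Tendsto u atTop (𝓝 x)), liminf (fun n => f n (u n)) atTop

/-- Sequential Γ-limsup in the norm topology. -/
def gLimsup (f : ℕ → X → EReal) (x : X) : EReal :=
  ⨅ (u : ℕ → X) (_ : Tendsto u atTop (𝓝 x)), limsup (fun n => f n (u n)) atTop

/-- Weak-star convergence of a sequence of continuous linear functionals. -/
def WStarTendsto (u : ℕ → X →L[ℝ] ℝ) (p : X →L[ℝ] ℝ) : Prop :=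
  ∀ x : X, Tendsto (fun n => u n x) atTop (𝓝 (p x))

/-- Sequential Γ-liminf in the weak-star topology of the dual. -/
def gLiminfW (g : ℕ → (X →L[ℝ] ℝ) → EReal) (p : X →L[ℝ] ℝ) : EReal :=
  ⨅ (u : ℕ → X →L[ℝ] ℝ) (_ : WStarTendsto u p), liminf (fun n => g n (u n)) atTop

/-- Sequential Γ-limsup in the weak-star topology of the dual. -/
def gLimsupW (g : ℕ → (X →L[ℝ] ℝ) → EReal) (p : X →L[ℝ] ℝ) : EReal :=
  ⨅ (u : ℕ → X →L[ℝ] ℝ) (_ : WStarTendsto u p), limsup (fun n => g n (u n)) atTop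

/-- Graph of the convex subdifferential. -/
def subdiff (f : X → EReal) : Set (X × (X →L[ℝ] ℝ)) :=
  {q | f q.1 + fconj f q.2 = ((q.2 q.1 : ℝ) : EReal)}

/-- Graph of the Fenchel subdifferential of an arbitrary function. -/
def fenSubdiff (g : X → EReal) : Set (X × (X →L[ℝ] ℝ)) :=
  {q | g q.1 ≠ ⊤ ∧ ∀ u : X, ((q.2 u - q.2 q.1 : ℝ) : EReal) + g q.1 ≤ g u}

/-- Moreau envelope. -/
def moreau (f : X → EReal) (lam : ℝ) (x : X) : EReal :=
  ⨅ y : X, f y + ((1 / (2 * lam) * ‖x - y‖ ^ 2 : ℝ) : EReal)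


/-!
The Fenchel–Young equality `(xₙ, xₙ*) ∈ ∂fₙ` yields the subgradient inequality
`⟨xₙ*, u - xₙ⟩ + fₙ(xₙ) ≤ fₙ(u)` for every `u`. By the uniform boundedness principle the
weak-star convergent `xₙ*` are bounded, so `⟨xₙ*, uₙ - xₙ⟩ → ⟨x*, u - x⟩` whenever `uₙ → u`.
Passing to the liminf (limsup) along any `uₙ → u` gives
`⟨x*, u - x⟩ + liminf fₙ(xₙ) ≤ Γ-liminf fₙ(u)`, and the same with limsup. At `u = x` these are
the equalities (a); for general `u` they are the subgradient inequalities (b), the finiteness at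
`x` coming from `Γ-liminf fₙ(x) > -∞` and, via `u = lim aₙ`, from `limsup fₙ(aₙ) < ∞`.
-/

theorem WStarTendsto.tendsto_apply [CompleteSpace X] {ps : ℕ → X →L[ℝ] ℝ} {p : X →L[ℝ] ℝ}
    (hp : WStarTendsto ps p) {zs : ℕ → X} {z : X} (hz : Tendsto zs atTop (𝓝 z)) :
    Tendsto (fun n => ps n (zs n)) atTop (𝓝 (p z)) := by
  obtain ⟨C, hC⟩ : ∃ C, ∀ n, ‖ps n‖ ≤ C := banach_steinhaus fun y => by
    obtain ⟨c, hc⟩ := (hp y).norm.bddAbove_range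
    exact ⟨c, fun n => hc ⟨n, rfl⟩⟩
  have hsmall : Tendsto (fun n => ps n (zs n - z)) atTop (𝓝 0) := by
    refine squeeze_zero_norm (fun n => ((ps n).le_opNorm _).trans
      (mul_le_mul_of_nonneg_right (hC n) (norm_nonneg _))) ?_
    simpa using (tendsto_iff_norm_sub_tendsto_zero.1 hz).const_mul C
  simpa using hsmall.add (hp z)

theorem EReal.coe_add_liminf_le_liminf {α : Type*} {l : Filter α} [l.NeBot] {a : α → ℝ} {c : ℝ}
    (ha : Tendsto a l (𝓝 c)) {u v : α → EReal} (h : ∀ i, (a i : EReal) + u i ≤ v i) :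
    (c : EReal) + liminf u l ≤ liminf v l := calc
  (c : EReal) + liminf u l = liminf (fun i => (a i : EReal)) l + liminf u l := by
    rw [(EReal.tendsto_coe.2 ha).liminf_eq]
  _ ≤ liminf ((fun i => (a i : EReal)) + u) l := EReal.le_liminf_add
  _ ≤ liminf v l := liminf_le_liminf (Eventually.of_forall h)

theorem EReal.coe_add_limsup_le_limsup {α : Type*} {l : Filter α} [l.NeBot] {a : α → ℝ} {c : ℝ}
    (ha : Tendsto a l (𝓝 c)) {u v : α → EReal} (h : ∀ i, (a i : EReal) + u i ≤ v i) :
    (c : EReal) + limsup u l ≤ limsup v l := calc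
  (c : EReal) + limsup u l = limsup u l + liminf (fun i => (a i : EReal)) l := by
    rw [(EReal.tendsto_coe.2 ha).liminf_eq, add_comm]
  _ ≤ limsup (u + fun i => (a i : EReal)) l := EReal.le_limsup_add
  _ ≤ limsup v l := limsup_le_limsup (Eventually.of_forall fun i => (add_comm _ _).trans_le (h i))

theorem le_fconj (f : X → EReal) (p : X →L[ℝ] ℝ) (u : X) :
    ((p u : ℝ) : EReal) - f u ≤ fconj f p :=
  le_iSup (fun u => ((p u : ℝ) : EReal) - f u) u

theorem fconj_le_coe_iff {f : X → EReal} {p : X →L[ℝ] ℝ} {c : ℝ} :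
    fconj f p ≤ c ↔ ∀ u, ((p u - c : ℝ) : EReal) ≤ f u := by
  refine iSup_le_iff.trans (forall_congr' fun u => ?_)
  rw [EReal.sub_le_iff_le_add (.inr (EReal.coe_ne_top c)) (.inr (EReal.coe_ne_bot c)),
    EReal.coe_sub, EReal.sub_le_iff_le_add (.inl (EReal.coe_ne_bot c))
      (.inl (EReal.coe_ne_top c)), add_comm]

theorem fconj_le_iff_mem_fenSubdiff {f : X → EReal} {x : X} {p : X →L[ℝ] ℝ} {r : ℝ}
    (hr : f x = r) : fconj f p ≤ ((p x - r : ℝ) : EReal) ↔ (x, p) ∈ fenSubdiff f := by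
  simp only [fconj_le_coe_iff, fenSubdiff, Set.mem_ofPred_eq, hr, ne_eq, EReal.coe_ne_top,
    not_false_eq_true, true_and, ← EReal.coe_add, sub_sub_eq_add_sub, add_sub_right_comm]

theorem mem_subdiff_iff {f : X → EReal} {x : X} {p : X →L[ℝ] ℝ} :
    (x, p) ∈ subdiff f ↔ (x, p) ∈ fenSubdiff f ∧ f x ≠ ⊥ := by
  change f x + fconj f p = ((p x : ℝ) : EReal) ↔ _
  constructor
  · intro h
    have hx_bot : f x ≠ ⊥ := fun hb => by
      rw [hb, EReal.bot_add] at h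
      exact EReal.coe_ne_bot _ h.symm
    have hconj_bot : fconj f p ≠ ⊥ := fun hb => by
      rw [hb, EReal.add_bot] at h
      exact EReal.coe_ne_bot _ h.symm
    have hx_top : f x ≠ ⊤ := fun ht => by
      rw [ht, EReal.top_add_of_ne_bot hconj_bot] at h
      exact EReal.coe_ne_top _ h.symm
    lift f x to ℝ using ⟨hx_top, hx_bot⟩ with r hr
    refine ⟨(fconj_le_iff_mem_fenSubdiff hr.symm).1 ?_, EReal.coe_ne_bot r⟩
    rw [EReal.coe_sub, EReal.le_sub_iff_add_le (.inl (EReal.coe_ne_bot r))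
      (.inl (EReal.coe_ne_top r)), add_comm, h]
  · rintro ⟨hfen, hx_bot⟩
    lift f x to ℝ using ⟨hfen.1, hx_bot⟩ with r hr
    have hconj : fconj f p = ((p x - r : ℝ) : EReal) :=
      le_antisymm ((fconj_le_iff_mem_fenSubdiff hr.symm).2 hfen)
        (by simpa [← hr] using le_fconj f p x)
    rw [hconj, ← EReal.coe_add, add_sub_cancel]

section GammaLimits

variable {f : ℕ → X → EReal} {x : X}

omit [NormedSpace ℝ X] in
theorem gLiminf_le_liminf {us : ℕ → X} (hus : Tendsto us atTop (𝓝 x)) :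
    gLiminf f x ≤ liminf (fun n => f n (us n)) atTop :=
  iInf₂_le us hus

omit [NormedSpace ℝ X] in
theorem gLimsup_le_limsup {us : ℕ → X} (hus : Tendsto us atTop (𝓝 x)) :
    gLimsup f x ≤ limsup (fun n => f n (us n)) atTop :=
  iInf₂_le us hus

omit [NormedSpace ℝ X] in
theorem gLiminf_le_gLimsup (f : ℕ → X → EReal) (x : X) : gLiminf f x ≤ gLimsup f x :=
  iInf₂_mono fun _ _ => liminf_le_limsup

variable [CompleteSpace X] {p : X →L[ℝ] ℝ} {xs : ℕ → X} {ps : ℕ → X →L[ℝ] ℝ}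
  (hsub : ∀ n, (xs n, ps n) ∈ fenSubdiff (f n)) (hx : Tendsto xs atTop (𝓝 x))
  (hp : WStarTendsto ps p)
include hsub hx hp

theorem coe_sub_add_liminf_le_gLiminf (u : X) :
    ((p u - p x : ℝ) : EReal) + liminf (fun n => f n (xs n)) atTop ≤ gLiminf f u :=
  le_iInf₂ fun _ hus => EReal.coe_add_liminf_le_liminf
    ((hp.tendsto_apply hus).sub (hp.tendsto_apply hx)) fun n => (hsub n).2 _

theorem coe_sub_add_limsup_le_gLimsup (u : X) :
    ((p u - p x : ℝ) : EReal) + limsup (fun n => f n (xs n)) atTop ≤ gLimsup f u :=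
  le_iInf₂ fun _ hus => EReal.coe_add_limsup_le_limsup
    ((hp.tendsto_apply hus).sub (hp.tendsto_apply hx)) fun n => (hsub n).2 _

theorem gLiminf_eq_liminf : gLiminf f x = liminf (fun n => f n (xs n)) atTop :=
  (gLiminf_le_liminf hx).antisymm (by simpa using coe_sub_add_liminf_le_gLiminf hsub hx hp x)

theorem gLimsup_eq_limsup : gLimsup f x = limsup (fun n => f n (xs n)) atTop :=
  (gLimsup_le_limsup hx).antisymm (by simpa using coe_sub_add_limsup_le_gLimsup hsub hx hp x)

end GammaLimits

theorem stmt11_general {X : Type*} [NormedAddCommGroup X] [NormedSpace ℝ X] [CompleteSpace X]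
    (f : ℕ → X → EReal)
    (hliminf : ∀ x : X, ⊥ < gLiminf f x)
    (a : ℕ → X) (abar : X) (ha : Tendsto a atTop (𝓝 abar))
    (hfa : limsup (fun n => f n (a n)) atTop < ⊤) :
    ∀ (x : X) (p : X →L[ℝ] ℝ) (xs : ℕ → X) (ps : ℕ → X →L[ℝ] ℝ),
      (∀ n, (xs n, ps n) ∈ subdiff (f n)) →
      Tendsto xs atTop (𝓝 x) → WStarTendsto ps p →
      (gLiminf f x = liminf (fun n => f n (xs n)) atTop ∧
        gLimsup f x = limsup (fun n => f n (xs n)) atTop) ∧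
      ((x, p) ∈ fenSubdiff (fun y => gLiminf f y) ∧
        (x, p) ∈ subdiff (fun y => gLimsup f y)) := by
  intro x p xs ps hsub hx hp
  have hfen : ∀ n, (xs n, ps n) ∈ fenSubdiff (f n) := fun n => (mem_subdiff_iff.1 (hsub n)).1
  have hL := gLiminf_eq_liminf hfen hx hp
  have hM := gLimsup_eq_limsup hfen hx hp
  have hM_top : gLimsup f x ≠ ⊤ := fun htop => by
    have hlt := (coe_sub_add_limsup_le_gLimsup hfen hx hp abar).trans_lt
      ((gLimsup_le_limsup ha).trans_lt hfa)
    rw [← hM, htop, EReal.add_top_of_ne_bot (EReal.coe_ne_bot _)] at hlt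
    exact hlt.ne rfl
  have hLM := gLiminf_le_gLimsup f x
  refine ⟨⟨hL, hM⟩, ⟨ne_top_of_le_ne_top hM_top hLM, fun u => ?_⟩,
    mem_subdiff_iff.2 ⟨⟨hM_top, fun u => ?_⟩, ((hliminf x).trans_le hLM).ne'⟩⟩
  · simpa only [hL] using coe_sub_add_liminf_le_gLiminf hfen hx hp u
  · simpa only [hM] using coe_sub_add_limsup_le_gLimsup hfen hx hp u

/-- Limits of values and subgradients along graphically convergent subdifferential
sequences. -/
theorem stmt11 {X : Type*} [NormedAddCommGroup X] [NormedSpace ℝ X] [CompleteSpace X]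
    (f : ℕ → X → EReal) (hf : ∀ n, IsPLC (f n))
    (hliminf : ∀ x : X, ⊥ < gLiminf f x)
    (a : ℕ → X) (abar : X) (ha : Tendsto a atTop (𝓝 abar))
    (hfa : limsup (fun n => f n (a n)) atTop < ⊤) :
    ∀ (x : X) (p : X →L[ℝ] ℝ) (xs : ℕ → X) (ps : ℕ → X →L[ℝ] ℝ),
      (∀ n, (xs n, ps n) ∈ subdiff (f n)) →
      Tendsto xs atTop (𝓝 x) → WStarTendsto ps p →
      (gLiminf f x = liminf (fun n => f n (xs n)) atTop ∧
        gLimsup f x = limsup (fun n => f n (xs n)) atTop) ∧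
      ((x, p) ∈ fenSubdiff (fun y => gLiminf f y) ∧
        (x, p) ∈ subdiff (fun y => gLimsup f y)) :=
  stmt11_general f hliminf a abar ha hfa
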